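/- For every regular language L ⊆ Σ* there exists a regular language L' ⊆ Σ* such that every word of L' is a canonical word and φ(L') = φ(L). -/

import Mathlib

/-- 2×2 integer matrices. -/
abbrev M2 := Matrix (Fin 2) (Fin 2) ℤ

/-- A matrix belongs to GL(2,ℤ), i.e. has determinant ±1. -/
def IsGL (A : M2) : Prop := A.det = 1 ∨ A.det = -1

/-- The four-letter alphabet Σ = {X, N, S, R}. -/
inductive Alph : Type | X | N | S | R
deriving DecidableEq

instance : Fintype Alph :=
  ⟨{Alph.X, Alph.N, Alph.S, Alph.R}, fun x => by cases x <;> simp⟩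

/-- The matrices assigned to letters of Σ. -/
def phiLetter : Alph → M2
  | Alph.X => !![-1, 0; 0, -1]
  | Alph.N => !![1, 0; 0, -1]
  | Alph.S => !![0, -1; 1, 0]
  | Alph.R => !![0, -1; 1, 1]

/-- The monoid homomorphism φ : Σ* → GL(2,ℤ) (valued in matrices). -/
def phi (w : List Alph) : M2 := (w.map phiLetter).prod

/-- A word over Σ is canonical: no subword SS or RRR, the letter N occurs only in
the first position, and X occurs only in the first position or immediately after N. -/
def Canonical (w : List Alph) : Prop :=
  ¬ [Alph.S, Alph.S] <:+: w ∧
  ¬ [Alph.R, Alph.R, Alph.R] <:+: w ∧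
  (∀ i : Fin w.length, w.get i = Alph.N → (i : ℕ) = 0) ∧
  (∀ i : Fin w.length, w.get i = Alph.X →
      (i : ℕ) = 0 ∨ ((i : ℕ) = 1 ∧ w.get ⟨0, Nat.lt_of_le_of_lt (Nat.zero_le _) i.isLt⟩ = Alph.N))

/-- A subset of GL(2,ℤ) is regular if it is the image under φ of a regular language. -/
def RegularSubset (S : Set M2) : Prop :=
  ∃ L : Language Alph, L.IsRegular ∧ phi '' L = S

/-!
Read a word from right to left. Its canonical form `N^d X^g v` can be maintained with the core
`v ∈ {S, R}*` on a pushdown stack: a new letter is first moved past `N^d X^g` (`X` is central,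
`S N = -N S`, `R N = N S R R S`), which leaves a short word over `{S, R}` to be put in front of
`v`, letter by letter, each letter either pushed or cancelled against the top of the stack
(`S² = R³ = -1`). Running the automaton of `L` backwards in the control states turns this into a
pushdown system whose runs all preserve `φ` and whose greedy runs reach the canonical forms of
the words of `L`. The stacks reachable in a pushdown system form a regular language (Büchi, via a
saturated automaton), so intersecting them with the regular set of words of canonical shape
gives `L'`.
-/

/-- Configurations are pairs `(p, s)` with the stack `s` written top first. The rules are
`(p, s) ⟶ (p', c :: s)` for `push p c p'`, `(p, c :: s) ⟶ (p', s)` for `pop p c p'` and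
`(p, s) ⟶ (p', s)` for `move p p'`; the initial configurations are `(p, [])`, `p ∈ init`. -/
structure PushdownSystem (P Γ : Type*) where
  init : Set P
  push : P → Γ → P → Prop
  pop : P → Γ → P → Prop
  move : P → P → Prop

namespace PushdownSystem

variable {P : Type} {Γ : Type*} (Δ : PushdownSystem P Γ)

inductive Reachable : P → List Γ → Prop
  | init {p} : p ∈ Δ.init → Reachable p []
  | push {p c p' s} : Reachable p s → Δ.push p c p' → Reachable p' (c :: s)
  | pop {p c p' s} : Reachable p (c :: s) → Δ.pop p c p' → Reachable p' s
  | move {p p' s} : Reachable p s → Δ.move p p' → Reachable p' s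

def language (p : P) : Language Γ := {s | Δ.Reachable p s}

/-- The saturated automaton: reading a stack top first, the state `some p` accepts exactly the
stacks reachable in control state `p`, and `none` is the bottom of the stack. The rule `trans`
absorbs ε-moves, so that a `pop` rule only has to look at a single edge. -/
inductive Saturation : Option P → Option Γ → Option P → Prop
  | init {p} : p ∈ Δ.init → Saturation (some p) none none
  | push {p c p'} : Δ.push p c p' → Saturation (some p') (some c) (some p)
  | move {p p'} : Δ.move p p' → Saturation (some p') none (some p)
  | pop {p c p' x} :
      Δ.pop p c p' → Saturation (some p) (some c) x → Saturation (some p') none x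
  | trans {x y z o} : Saturation x none y → Saturation y o z → Saturation x o z

def saturation (p : P) : εNFA Γ (Option P) where
  step x o := {y | Δ.Saturation x o y}
  start := {some p}
  accept := {none}

def Holds : Option P → List Γ → Prop
  | some p, s => Δ.Reachable p s
  | none, s => s = []

theorem Saturation.holds {x o y} (h : Δ.Saturation x o y) {s : List Γ} (hs : Δ.Holds y s) :
    Δ.Holds x (o.toList ++ s) := by
  induction h generalizing s with
  | init hp => cases (hs : s = []); exact .init hp
  | push hr => exact .push hs hr
  | move hr => exact .move hs hr
  | pop hr _ ih => exact .pop (ih hs) hr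
  | trans _ _ ih₁ ih₂ => exact ih₁ (ih₂ hs)

theorem holds_of_isPath {p₀ : P} {x y : Option P} {l : List (Option Γ)}
    (h : (Δ.saturation p₀).IsPath x y l) {s : List Γ} (hs : Δ.Holds y s) :
    Δ.Holds x (l.reduceOption ++ s) := by
  induction h generalizing s with
  | nil => exact hs
  | cons t x u a l hstep _ ih => cases a <;> simpa using Saturation.holds Δ hstep (ih hs)

theorem exists_saturation_of_isPath {p₀ : P} {x y : Option P} {l : List (Option Γ)}
    (h : (Δ.saturation p₀).IsPath x y l) {c : Γ} {s : List Γ} (hl : l.reduceOption = c :: s) :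
    ∃ z l', Δ.Saturation x (some c) z ∧ (Δ.saturation p₀).IsPath z y l' ∧
      l'.reduceOption = s := by
  induction h with
  | nil => simp at hl
  | cons t x u a l hstep hpath ih =>
    cases a with
    | none =>
      obtain ⟨z, l', hz, hp, hr⟩ := ih (by simpa using hl)
      exact ⟨z, l', .trans hstep hz, hp, hr⟩
    | some c' =>
      obtain ⟨rfl, rfl⟩ : c' = c ∧ l.reduceOption = s := by simpa using hl
      exact ⟨t, l, hstep, hpath, rfl⟩

theorem exists_isPath_of_reachable (p₀ : P) {p : P} {s : List Γ} (h : Δ.Reachable p s) :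
    ∃ l : List (Option Γ),
      (Δ.saturation p₀).IsPath (some p) none l ∧ l.reduceOption = s := by
  induction h with
  | init hp => exact ⟨[none], .cons _ _ _ _ _ (Saturation.init hp) (.nil _), rfl⟩
  | push _ hr ih =>
    obtain ⟨l, hl, rfl⟩ := ih
    exact ⟨some _ :: l, .cons _ _ _ _ _ (Saturation.push hr) hl, by simp⟩
  | move _ hr ih =>
    obtain ⟨l, hl, rfl⟩ := ih
    exact ⟨none :: l, .cons _ _ _ _ _ (Saturation.move hr) hl, by simp⟩
  | pop _ hr ih =>
    obtain ⟨l, hl, hs⟩ := ih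
    obtain ⟨z, l', hz, hl', rfl⟩ := Δ.exists_saturation_of_isPath hl hs
    exact ⟨none :: l', .cons _ _ _ _ _ (Saturation.pop hr hz) hl', by simp⟩

theorem saturation_accepts (p : P) : (Δ.saturation p).accepts = Δ.language p := by
  ext s
  rw [εNFA.mem_accepts_iff_exists_path]
  constructor
  · rintro ⟨x, y, l, rfl, rfl, rfl, hl⟩
    show Δ.Holds (some p) _
    simpa using Δ.holds_of_isPath hl (s := []) rfl
  · intro h
    obtain ⟨l, hl, rfl⟩ := Δ.exists_isPath_of_reachable p h
    exact ⟨_, _, l, rfl, rfl, rfl, hl⟩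

theorem isRegular_language [Finite P] (p : P) : (Δ.language p).IsRegular :=
  ⟨Set (Option P), Fintype.ofFinite _, (Δ.saturation p).toNFA.toDFA, by
    rw [NFA.toDFA_correct, εNFA.toNFA_correct, saturation_accepts]⟩

end PushdownSystem

namespace CanonicalForm

open Alph

lemma phi_cons (a : Alph) (w : List Alph) : phi (a :: w) = phiLetter a * phi w := by
  simp [phi]

lemma phi_append (u v : List Alph) : phi (u ++ v) = phi u * phi v := by
  simp [phi]

lemma phiLetter_X : phiLetter X = -1 := by decide

def sgn (b : Bool) : M2 := if b then -1 else 1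

@[simp] lemma sgn_false : sgn false = 1 := rfl

@[simp] lemma sgn_true : sgn true = -1 := rfl

lemma sgn_xor (a b : Bool) : sgn (a ^^ b) = sgn a * sgn b := by
  cases a <;> cases b <;> simp [sgn]

def nPow (d : Bool) : M2 := if d then phiLetter N else 1

def prefixNX (d g : Bool) : List Alph := (if d then [N] else []) ++ (if g then [X] else [])

lemma phi_prefixNX_append (d g : Bool) (v : List Alph) :
    phi (prefixNX d g ++ v) = nPow d * (sgn g * phi v) := by
  cases d <;> cases g <;> simp [prefixNX, nPow, phi_cons, phiLetter_X]

def CoreReduced : List Alph → Prop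
  | [] => True
  | S :: v => v.head? ≠ some S ∧ CoreReduced v
  | R :: v => v.take 2 ≠ [R, R] ∧ CoreReduced v
  | _ :: _ => False

lemma CoreReduced.of_cons {a : Alph} {v : List Alph} (h : CoreReduced (a :: v)) :
    CoreReduced v := by
  cases a <;> simp_all [CoreReduced]

lemma CoreReduced.mem {v : List Alph} (h : CoreReduced v) : ∀ a ∈ v, a = S ∨ a = R := by
  induction v with
  | nil => simp
  | cons a v ih =>
    intro b hb
    rcases List.mem_cons.mp hb with rfl | hb
    · cases b <;> simp_all [CoreReduced]
    · exact ih h.of_cons b hb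

lemma CoreReduced.not_infix {v : List Alph} (h : CoreReduced v) :
    ¬ [S, S] <:+: v ∧ ¬ [R, R, R] <:+: v := by
  induction v with
  | nil => simp
  | cons a v ih =>
    obtain ⟨ih₁, ih₂⟩ := ih h.of_cons
    cases a <;> rcases v with _ | ⟨b, v⟩ <;> try cases b
    all_goals
      simp_all [List.infix_cons_iff, List.prefix_iff_eq_take, CoreReduced, @eq_comm _ [R]]

theorem canonical_prefixNX_append (d g : Bool) {v : List Alph} (hv : CoreReduced v) :
    Canonical (prefixNX d g ++ v) := by
  obtain ⟨hSS, hRRR⟩ := hv.not_infix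
  have hN : ∀ i (hi : i < v.length), v[i] ≠ N := fun i hi h => by
    simpa [h] using hv.mem _ (List.getElem_mem hi)
  have hX : ∀ i (hi : i < v.length), v[i] ≠ X := fun i hi h => by
    simpa [h] using hv.mem _ (List.getElem_mem hi)
  refine ⟨?_, ?_, ?_, ?_⟩
  · cases d <;> cases g <;> simp_all [prefixNX, List.infix_cons_iff]
  · cases d <;> cases g <;> simp_all [prefixNX, List.infix_cons_iff]
  · rintro ⟨_ | _ | i, hi⟩ <;> cases d <;> cases g <;> simp_all [prefixNX]
  · rintro ⟨_ | _ | i, hi⟩ <;> cases d <;> cases g <;> simp_all [prefixNX]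

def IsShaped (w : List Alph) : Prop := ∃ d g v, w = prefixNX d g ++ v ∧ CoreReduced v

inductive Tail
  | none | s | r | rr
  deriving DecidableEq

def Tail.word : Tail → List Alph
  | none => [] | s => [S] | r => [R] | rr => [R, R]

inductive ShapeState
  | start | afterN | core (t : Tail) | dead
  deriving DecidableEq

instance : Fintype ShapeState :=
  ⟨{.start, .afterN, .core .none, .core .s, .core .r, .core .rr, .dead}, by
    rintro (_ | _ | (_ | _ | _ | _) | _) <;> simp⟩

def shapeStep : ShapeState → Alph → ShapeState
  | .start, N => .afterN
  | .start, X | .afterN, X => .core .none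
  | .start, S | .afterN, S => .core .s
  | .start, R | .afterN, R => .core .r
  | .core .s, S => .dead
  | .core _, S => .core .s
  | .core .r, R => .core .rr
  | .core .rr, R => .dead
  | .core _, R => .core .r
  | _, _ => .dead

def shapeDFA : DFA Alph ShapeState where
  step := shapeStep
  start := .start
  accept := {x | x ≠ .dead}

def ShapeState.Accepts : ShapeState → List Alph → Prop
  | .start, w => IsShaped w
  | .afterN, w => ∃ g v, w = prefixNX false g ++ v ∧ CoreReduced v
  | .core t, w => CoreReduced (t.word ++ w)
  | .dead, _ => False

lemma ShapeState.accepts_nil (x : ShapeState) : x.Accepts [] ↔ x ≠ .dead := by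
  rcases x with _ | _ | (_ | _ | _ | _) | _ <;>
    simp [ShapeState.Accepts, IsShaped, prefixNX, Tail.word, CoreReduced]

lemma ShapeState.accepts_cons (x : ShapeState) (a : Alph) (w : List Alph) :
    x.Accepts (a :: w) ↔ (shapeStep x a).Accepts w := by
  rcases x with _ | _ | (_ | _ | _ | _) | _ <;> cases a <;>
    simp [ShapeState.Accepts, IsShaped, prefixNX, shapeStep, Tail.word, CoreReduced,
      Bool.exists_bool]

lemma shapeDFA_evalFrom_ne_dead (x : ShapeState) (w : List Alph) :
    shapeDFA.evalFrom x w ≠ .dead ↔ x.Accepts w := by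
  induction w generalizing x with
  | nil => exact x.accepts_nil.symm
  | cons a w ih => rw [ShapeState.accepts_cons, DFA.evalFrom_cons]; exact ih _

theorem mem_shapeDFA_accepts (w : List Alph) : w ∈ shapeDFA.accepts ↔ IsShaped w :=
  shapeDFA_evalFrom_ne_dead .start w

/-- A pending operation on the core: put `word` in front of the stack. It is carried out
through its last letter `letter`, which is either pushed, leaving `afterPush`, or cancelled
against the top of the stack, leaving `afterPop` and a sign `popFlips`. -/
inductive CoreOp
  | s | r | rr | sr | srr | srrs
  deriving DecidableEq

namespace CoreOp

instance : Fintype CoreOp :=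
  ⟨{s, r, rr, sr, srr, srrs}, fun o => by cases o <;> simp⟩

def word : CoreOp → List Alph
  | s => [S] | r => [R] | rr => [R, R] | sr => [S, R] | srr => [S, R, R] | srrs => [S, R, R, S]

def letter : CoreOp → Alph
  | s | srrs => S
  | r | rr | sr | srr => R

def afterPush : CoreOp → Option CoreOp
  | s | r => none
  | rr => some r
  | sr => some s
  | srr => some sr
  | srrs => some srr

def afterPop : CoreOp → Option CoreOp
  | s | rr => none
  | r => some rr
  | sr | srrs => some srr
  | srr => some s

def popFlips : CoreOp → Bool
  | r | sr => false
  | s | rr | srr | srrs => true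

end CoreOp

def jobWord (j : Option CoreOp) : List Alph := j.elim [] CoreOp.word

@[simp] lemma jobWord_none : jobWord none = [] := rfl

@[simp] lemma jobWord_some (o : CoreOp) : jobWord (some o) = o.word := rfl

lemma jobWord_afterPush_append (o : CoreOp) : jobWord o.afterPush ++ [o.letter] = o.word := by
  cases o <;> rfl

lemma phi_word_append_letter (o : CoreOp) :
    phi (o.word ++ [o.letter]) = sgn o.popFlips * phi (jobWord o.afterPop) := by
  cases o <;> decide

/-- Moving the letter `a` past `N^d` gives `N^d'`, a sign and a pending core operation, since
`X` is central, `S N = -N S` and `R N = N S R R S`. -/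
def readLetter : Alph → Bool → Bool × Bool × Option CoreOp
  | X, d => (d, true, none)
  | N, d => (!d, false, none)
  | S, d => (d, d, some .s)
  | R, false => (false, false, some .r)
  | R, true => (true, false, some .srrs)

lemma phiLetter_mul_nPow (a : Alph) (d : Bool) :
    phiLetter a * nPow d =
      nPow (readLetter a d).1 *
        (sgn (readLetter a d).2.1 * phi (jobWord (readLetter a d).2.2)) := by
  cases a <;> cases d <;> decide

def coreValue (g : Bool) (j : Option CoreOp) (v : List Alph) : M2 := sgn g * phi (jobWord j ++ v)

lemma coreValue_push (g : Bool) (o : CoreOp) (v : List Alph) :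
    coreValue g o.afterPush (o.letter :: v) = coreValue g (some o) v := by
  rw [coreValue, coreValue, ← List.singleton_append, ← List.append_assoc,
    jobWord_afterPush_append, jobWord_some]

lemma coreValue_pop (g : Bool) (o : CoreOp) (v : List Alph) :
    coreValue (g ^^ o.popFlips) o.afterPop v = coreValue g (some o) (o.letter :: v) := by
  calc coreValue (g ^^ o.popFlips) o.afterPop v
      = sgn g * (sgn o.popFlips * phi (jobWord o.afterPop) * phi v) := by
        rw [coreValue, sgn_xor, phi_append]; simp only [mul_assoc]
    _ = sgn g * phi (o.word ++ [o.letter] ++ v) := by rw [phi_append _ v, phi_word_append_letter]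
    _ = coreValue g (some o) (o.letter :: v) := by simp [coreValue]

lemma coreValue_read (a : Alph) (d g : Bool) (v : List Alph) :
    nPow (readLetter a d).1 * coreValue (g ^^ (readLetter a d).2.1) (readLetter a d).2.2 v =
      phiLetter a * (nPow d * coreValue g none v) := by
  simp only [coreValue, jobWord_none, List.nil_append, phi_append, sgn_xor]
  rw [← mul_assoc (phiLetter a), phiLetter_mul_nPow]
  cases g <;> simp [mul_assoc]

inductive Control (σ : Type)
  | run (q : σ) (d g : Bool) (job : Option CoreOp)
  | out (d : Bool)

instance {σ : Type} [Finite σ] : Finite (Control σ) :=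
  Finite.of_injective
    (fun c : Control σ => match c with
      | .run q d g j => (Sum.inl (q, d, g, j) : (σ × Bool × Bool × Option CoreOp) ⊕ Bool)
      | .out d => Sum.inr d)
    (by rintro (_ | _) (_ | _) h <;> simp_all)

section Reduction

variable {σ : Type} (M : DFA Alph σ)

inductive Push : Control σ → Alph → Control σ → Prop
  | core {q d g} (o : CoreOp) : Push (.run q d g (some o)) o.letter (.run q d g o.afterPush)
  | emitX {d} : Push (.run M.start d true none) X (.out d)
  | emitN : Push (.out true) N (.out false)

inductive Pop : Control σ → Alph → Control σ → Prop
  | core {q d g} (o : CoreOp) :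
      Pop (.run q d g (some o)) o.letter (.run q d (g ^^ o.popFlips) o.afterPop)

inductive Move : Control σ → Control σ → Prop
  | read {q d g} (a : Alph) :
      Move (.run (M.step q a) d g none)
        (.run q (readLetter a d).1 (g ^^ (readLetter a d).2.1) (readLetter a d).2.2)
  | finish {d} : Move (.run M.start d false none) (.out d)

/-- Reads the words accepted by `M` from right to left, running `M` backwards from an accepting
state; `out` writes the prefix `N^d X^g` once the start state is reached. -/
def reductionSystem : PushdownSystem (Control σ) Alph where
  init := {c | ∃ q ∈ M.accept, c = .run q false false none}
  push := Push M
  pop := Pop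
  move := Move M

def Control.source : Control σ → σ
  | .run q _ _ _ => q
  | .out _ => M.start

def Control.value : Control σ → List Alph → M2
  | .run _ d g j, v => nPow d * coreValue g j v
  | .out d, v => nPow d * phi v

theorem exists_accepted_of_reachable {c : Control σ} {v : List Alph}
    (h : (reductionSystem M).Reachable c v) :
    ∃ t, M.evalFrom (c.source M) t ∈ M.accept ∧ phi t = c.value v := by
  induction h with
  | init hc =>
    obtain ⟨q, hq, rfl⟩ := hc
    exact ⟨[], hq, by simp [Control.value, coreValue, nPow, phi]⟩
  | push _ hr ih =>
    obtain ⟨t, ht, he⟩ := ih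
    cases hr with
    | core o => exact ⟨t, ht, he.trans (by simp [Control.value, coreValue_push])⟩
    | emitX =>
      exact ⟨t, ht, he.trans (by simp [Control.value, coreValue, phi_cons, phiLetter_X])⟩
    | emitN => exact ⟨t, ht, he.trans (by simp [Control.value, nPow, phi_cons])⟩
  | pop _ hr ih =>
    obtain ⟨t, ht, he⟩ := ih
    cases hr with
    | core o => exact ⟨t, ht, he.trans (by simp [Control.value, coreValue_pop])⟩
  | move _ hr ih =>
    obtain ⟨t, ht, he⟩ := ih
    cases hr with
    | read a => exact ⟨a :: t, ht, by simp [Control.value, phi_cons, he, coreValue_read]⟩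
    | finish => exact ⟨t, ht, he.trans (by simp [Control.value, coreValue])⟩

def Settles (q : σ) (d g : Bool) (j : Option CoreOp) (v : List Alph) : Prop :=
  (reductionSystem M).Reachable (.run q d g j) v →
    ∃ g' v', CoreReduced v' ∧ (reductionSystem M).Reachable (.run q d g' none) v' ∧
      coreValue g' none v' = coreValue g j v

variable {M} {q : σ} {d : Bool}

lemma settles_none {g : Bool} {v : List Alph} (hv : CoreReduced v) : Settles M q d g none v :=
  fun h => ⟨g, v, hv, h, rfl⟩

lemma Settles.push {g : Bool} {o : CoreOp} {v : List Alph}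
    (h : Settles M q d g o.afterPush (o.letter :: v)) : Settles M q d g (some o) v := fun hr =>
  (h (.push hr (Push.core o))).imp fun _ ⟨v', hv', hr', he⟩ =>
    ⟨v', hv', hr', he.trans (coreValue_push g o v)⟩

lemma Settles.pop {g : Bool} {o : CoreOp} {v : List Alph}
    (h : Settles M q d (g ^^ o.popFlips) o.afterPop v) :
    Settles M q d g (some o) (o.letter :: v) := fun hr =>
  (h (.pop hr (Pop.core o))).imp fun _ ⟨v', hv', hr', he⟩ =>
    ⟨v', hv', hr', he.trans (coreValue_pop g o v)⟩

lemma exists_eq_cons_cons_of_take_two {a : Alph} {v : List Alph} (h : v.take 2 = [a, a]) :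
    ∃ v', v = a :: a :: v' := by
  rcases v with _ | ⟨b, _ | ⟨c, v'⟩⟩ <;> simp_all

lemma take_two_ne_of_head?_ne {a : Alph} {v : List Alph} (h : v.head? ≠ some a) :
    v.take 2 ≠ [a, a] := by
  intro h'
  obtain ⟨v', rfl⟩ := exists_eq_cons_cons_of_take_two h'
  exact h rfl

lemma settles_s {g : Bool} {v : List Alph} (hv : CoreReduced v) : Settles M q d g (some .s) v := by
  by_cases h : v.head? = some S
  · obtain ⟨v', rfl⟩ := List.head?_eq_some_iff.1 h
    exact Settles.pop (o := .s) (settles_none hv.of_cons)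
  · exact Settles.push (o := .s) (settles_none ⟨h, hv⟩)

lemma settles_r {g : Bool} {v : List Alph} (hv : CoreReduced v) : Settles M q d g (some .r) v := by
  by_cases h : v.take 2 = [R, R]
  · obtain ⟨v', rfl⟩ := exists_eq_cons_cons_of_take_two h
    exact Settles.pop (o := .r) (Settles.pop (o := .rr) (settles_none hv.of_cons.of_cons))
  · exact Settles.push (o := .r) (settles_none ⟨h, hv⟩)

lemma settles_rr {g : Bool} {v : List Alph} (hv : CoreReduced v) :
    Settles M q d g (some .rr) v := by
  by_cases h : v.head? = some R
  · obtain ⟨v', rfl⟩ := List.head?_eq_some_iff.1 h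
    exact Settles.pop (o := .rr) (settles_none hv.of_cons)
  · exact Settles.push (o := .rr) (settles_r ⟨take_two_ne_of_head?_ne h, hv⟩)

lemma settles_sr {g : Bool} {v : List Alph} (hv : CoreReduced v) :
    Settles M q d g (some .sr) v := by
  by_cases h : v.take 2 = [R, R]
  · obtain ⟨v', rfl⟩ := exists_eq_cons_cons_of_take_two h
    exact Settles.pop (o := .sr) (Settles.pop (o := .srr) (settles_s hv.of_cons.of_cons))
  · exact Settles.push (o := .sr) (settles_s ⟨h, hv⟩)

lemma settles_srr {g : Bool} {v : List Alph} (hv : CoreReduced v) :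
    Settles M q d g (some .srr) v := by
  by_cases h : v.head? = some R
  · obtain ⟨v', rfl⟩ := List.head?_eq_some_iff.1 h
    exact Settles.pop (o := .srr) (settles_s hv.of_cons)
  · exact Settles.push (o := .srr) (settles_sr ⟨take_two_ne_of_head?_ne h, hv⟩)

lemma settles_srrs {g : Bool} {v : List Alph} (hv : CoreReduced v) :
    Settles M q d g (some .srrs) v := by
  by_cases h : v.head? = some S
  · obtain ⟨v', rfl⟩ := List.head?_eq_some_iff.1 h
    exact Settles.pop (o := .srrs) (settles_srr hv.of_cons)
  · exact Settles.push (o := .srrs) (settles_srr ⟨h, hv⟩)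

lemma settles (j : Option CoreOp) {g : Bool} {v : List Alph} (hv : CoreReduced v) :
    Settles M q d g j v := by
  rcases j with _ | _ | _ | _ | _ | _ | _
  exacts [settles_none hv, settles_s hv, settles_r hv, settles_rr hv, settles_sr hv,
    settles_srr hv, settles_srrs hv]

variable (M) in
theorem exists_reachable_of_evalFrom (t : List Alph) {q : σ} (ht : M.evalFrom q t ∈ M.accept) :
    ∃ d g v, CoreReduced v ∧ (reductionSystem M).Reachable (.run q d g none) v ∧
      nPow d * coreValue g none v = phi t := by
  induction t generalizing q with
  | nil =>
    exact ⟨false, false, [], trivial, .init ⟨q, ht, rfl⟩, by simp [nPow, coreValue, phi]⟩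
  | cons a t ih =>
    obtain ⟨d, g, v, hv, hr, he⟩ := ih ht
    obtain ⟨g', v', hv', hr', he'⟩ :=
      settles (readLetter a d).2.2 hv (hr.move (Move.read (M := M) (q := q) a))
    refine ⟨_, g', v', hv', hr', ?_⟩
    rw [he', coreValue_read, he, phi_cons]

theorem reachable_out_false {g : Bool} {v : List Alph}
    (h : (reductionSystem M).Reachable (.run M.start d g none) v) :
    (reductionSystem M).Reachable (.out false) (prefixNX d g ++ v) := by
  cases d <;> cases g
  · exact h.move Move.finish
  · exact h.push Push.emitX
  · exact (h.move Move.finish).push Push.emitN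
  · exact (h.push Push.emitX).push Push.emitN

end Reduction

end CanonicalForm

open CanonicalForm in
/-- For every regular language `L` over Σ there is a regular language `L'` consisting only of
canonical words with `φ(L') = φ(L)`. -/
theorem canonical_automaton (L : Language Alph) (hL : L.IsRegular) :
    ∃ L' : Language Alph, L'.IsRegular ∧ (∀ w ∈ L', Canonical w) ∧ phi '' L' = phi '' L := by
  obtain ⟨σ, _, M, rfl⟩ := hL
  refine ⟨(reductionSystem M).language (.out false) ⊓ shapeDFA.accepts,
    ((reductionSystem M).isRegular_language _).inf ⟨_, inferInstance, shapeDFA, rfl⟩, ?_, ?_⟩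
  · rintro w ⟨-, hw⟩
    obtain ⟨d, g, v, rfl, hv⟩ := (mem_shapeDFA_accepts w).1 hw
    exact canonical_prefixNX_append d g hv
  · ext A
    constructor
    · rintro ⟨w, ⟨hw, -⟩, rfl⟩
      obtain ⟨t, ht, he⟩ := exists_accepted_of_reachable M hw
      exact ⟨t, ht, by simpa [Control.value, nPow] using he⟩
    · rintro ⟨t, ht, rfl⟩
      obtain ⟨d, g, v, hv, hr, he⟩ := exists_reachable_of_evalFrom M t ht
      refine ⟨prefixNX d g ++ v,
        ⟨reachable_out_false hr, (mem_shapeDFA_accepts _).2 ⟨d, g, v, rfl, hv⟩⟩, ?_⟩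
      rw [phi_prefixNX_append, ← he, coreValue, jobWord_none, List.nil_append]
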